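/- Specialized Macdonald identity from 2-cores (Jacobi triple product form): Σ_{n≥1} (−1)^n T^{C(n,2)} (t^n − t^{1−n})/(1 − t) = (T;T)_∞ (tT;T)_∞ (T/t;T)_∞, as an identity of formal power series in T over ℚ(t), where (a;T)_∞ = Π_{k≥0}(1 − a T^k) and C(n,2) = n(n−1)/2. -/

import Mathlib

/-!
The Gaussian binomials `[n, k]` (Pascal recursion in both forms) give the finite triple product
`∏_{k<m} (1 + x X^{k+1}) (1 + x⁻¹ X^k) = ∑_{|j| ≤ m} [2m, m+j] x^j X^{j(j+1)/2}`.
Since `[a+b, a] (X;X)_n ≡ 1 mod X^{n+1}` once `a, b ≥ n`, multiplying by `(X;X)_m` and letting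
`m → ∞` yields Jacobi's triple product
`∑_{j ∈ ℤ} x^j X^{j(j+1)/2} = ∏_{k ≥ 0} (1 - X^{k+1}) (1 + x X^{k+1}) (1 + x⁻¹ X^k)`.
The exponents of `j = n` and `j = -n-1` agree, and for `x = -t` the paired coefficient is
`(-t)^n + (-t)^{-n-1} = (1 - t⁻¹) (-1)^{n+1} (t^{n+1} - t^{-n}) / (1 - t)`, where `1 - t⁻¹` is the
`k = 0` factor of `∏ (1 - t⁻¹ X^k)`.
-/

instance : TopologicalSpace (RatFunc ℚ) := ⊥

instance : TopologicalSpace (PowerSeries (RatFunc ℚ)) :=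
  inferInstanceAs (TopologicalSpace ((Unit →₀ ℕ) → RatFunc ℚ))

namespace JTP

noncomputable abbrev K := RatFunc ℚ
noncomputable def t : K := RatFunc.X

end JTP

open Finset Function Filter PowerSeries Topology

namespace Int

def triangular (j : ℤ) : ℕ := (j * (j + 1) / 2).toNat

theorem two_mul_triangular (j : ℤ) : 2 * (triangular j : ℤ) = j * (j + 1) := by
  have h : 0 ≤ j * (j + 1) := by rcases le_or_gt 0 j with h | h <;> nlinarith
  rw [triangular, toNat_of_nonneg (ediv_nonneg h zero_le_two)]
  exact two_mul_ediv_two_of_even (even_mul_succ_self j)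

@[simp]
theorem triangular_zero : triangular 0 = 0 := rfl

theorem triangular_add_one (j : ℤ) : (triangular (j + 1) : ℤ) = triangular j + (j + 1) := by
  linarith [two_mul_triangular j, two_mul_triangular (j + 1)]

theorem triangular_neg_add_one (j : ℤ) : triangular (-(j + 1)) = triangular j := by
  have := two_mul_triangular (-(j + 1))
  have := two_mul_triangular j
  grind

theorem triangular_natCast (n : ℕ) : triangular n = (n + 1).choose 2 := by
  have := two_mul_triangular n
  have := Nat.choose_two_right (n + 1)
  have : 2 ∣ (n + 1) * n := (Nat.even_mul_pred_self (n + 1)).two_dvd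
  zify at *
  grind

theorem le_triangular (j : ℤ) : j ≤ triangular j := by
  nlinarith [two_mul_triangular j]

theorem neg_le_triangular (j : ℤ) : -(j + 1) ≤ triangular j := by
  nlinarith [two_mul_triangular j]

end Int

theorem finsum_mul_laurent_trinomial {A : Type*} [CommRing A] (x : Aˣ) {c : ℤ → A}
    (hc : HasFiniteSupport c) (a b b' : A) :
    (∑ᶠ j, c j * ↑(x ^ j)) * (a + b * x + b' * ↑x⁻¹) =
      ∑ᶠ j, (a * c j + b * c (j - 1) + b' * c (j + 1)) * ↑(x ^ j) := by
  have hs (e : ℤ) (r : A) : HasFiniteSupport fun j ↦ r * c (j + e) * ↑(x ^ j) :=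
    ((hc.comp_of_injective (add_left_injective e)).fun_mul_right _).fun_mul_left _
  have hshift (e : ℤ) (r : A) :
      (∑ᶠ j, c j * ↑(x ^ j)) * (r * ↑(x ^ (-e))) = ∑ᶠ j, r * c (j + e) * ↑(x ^ j) := by
    rw [finsum_mul' _ _ (hc.fun_mul_left _), ← finsum_comp_equiv (Equiv.addRight e)]
    refine finsum_congr fun j ↦ ?_
    simp only [Equiv.coe_addRight, zpow_add, zpow_neg, Units.val_mul]
    linear_combination c (j + e) * ↑(x ^ j) * r * (x ^ e).mul_inv
  have htri : a + b * x + b' * ↑x⁻¹ =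
      a * ↑(x ^ (-0 : ℤ)) + b * ↑(x ^ (-(-1) : ℤ)) + b' * ↑(x ^ (-1 : ℤ)) := by
    simp
  rw [htri, mul_add, mul_add, hshift, hshift, hshift, ← finsum_add_distrib (hs _ _) (hs _ _),
    ← finsum_add_distrib ((hs _ _).fun_add (hs _ _)) (hs _ _)]
  refine finsum_congr fun j ↦ ?_
  simp only [add_zero, ← sub_eq_add_neg]
  ring

namespace PowerSeries

variable {R : Type*} [CommRing R]

theorem X_pow_smodEq_zero {n e : ℕ} (h : n ≤ e) :
    (X : R⟦X⟧) ^ e ≡ 0 [SMOD Ideal.span {(X : R⟦X⟧) ^ n}] :=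
  SModEq.zero.mpr (Ideal.mem_span_singleton.mpr (pow_dvd_pow X h))

theorem X_pow_mul_smodEq_zero (c : R⟦X⟧) {n e : ℕ} (h : n ≤ e) :
    X ^ e * c ≡ 0 [SMOD Ideal.span {(X : R⟦X⟧) ^ n}] := by
  simpa using (X_pow_smodEq_zero (R := R) h).mul (SModEq.refl c)

theorem one_add_mul_X_pow_smodEq_one (a : R⟦X⟧) {n e : ℕ} (h : n ≤ e) :
    1 + a * X ^ e ≡ 1 [SMOD Ideal.span {(X : R⟦X⟧) ^ n}] := by
  have := (SModEq.refl (1 : R⟦X⟧)).add ((SModEq.refl a).mul (X_pow_smodEq_zero (R := R) h))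
  rwa [mul_zero, add_zero] at this

theorem one_sub_mul_X_pow_smodEq_one (a : R⟦X⟧) {n e : ℕ} (h : n ≤ e) :
    1 - a * X ^ e ≡ 1 [SMOD Ideal.span {(X : R⟦X⟧) ^ n}] := by
  simpa [sub_eq_add_neg, ← neg_mul] using one_add_mul_X_pow_smodEq_one (-a) h

theorem smodEq_X_pow_iff {f g : R⟦X⟧} {n : ℕ} :
    f ≡ g [SMOD Ideal.span {(X : R⟦X⟧) ^ n}] ↔ ∀ d < n, coeff d f = coeff d g := by
  simp_rw [SModEq.sub_mem, Ideal.mem_span_singleton, X_pow_dvd_iff, map_sub, sub_eq_zero]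

theorem SModEq.X_pow_mono {f g : R⟦X⟧} {m n : ℕ}
    (h : f ≡ g [SMOD Ideal.span {(X : R⟦X⟧) ^ n}]) (hmn : m ≤ n) :
    f ≡ g [SMOD Ideal.span {(X : R⟦X⟧) ^ m}] :=
  h.mono (Ideal.span_singleton_le_span_singleton.mpr (pow_dvd_pow X hmn))

theorem prod_smodEq_one {ι : Type*} {s : Finset ι} {f : ι → R⟦X⟧} {n : ℕ}
    (h : ∀ i ∈ s, f i ≡ 1 [SMOD Ideal.span {(X : R⟦X⟧) ^ n}]) :
    ∏ i ∈ s, f i ≡ 1 [SMOD Ideal.span {(X : R⟦X⟧) ^ n}] := by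
  simpa using SModEq.prod h

noncomputable def qPochhammer (n : ℕ) : R⟦X⟧ := ∏ i ∈ range n, (1 - X ^ (i + 1))

theorem qPochhammer_zero : qPochhammer 0 = (1 : R⟦X⟧) := prod_range_zero _

theorem qPochhammer_succ (n : ℕ) :
    qPochhammer (n + 1) = qPochhammer n * (1 - X ^ (n + 1) : R⟦X⟧) :=
  prod_range_succ _ _

theorem isUnit_qPochhammer (n : ℕ) : IsUnit (qPochhammer n : R⟦X⟧) := by
  simp [qPochhammer, isUnit_iff_constantCoeff]

theorem qPochhammer_smodEq {n a : ℕ} (h : n ≤ a) :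
    qPochhammer a ≡ qPochhammer n [SMOD Ideal.span {(X : R⟦X⟧) ^ (n + 1)}] := by
  rw [qPochhammer, qPochhammer, ← prod_range_mul_prod_Ico _ h]
  calc _ ≡ (∏ i ∈ range n, (1 - X ^ (i + 1))) * 1 [SMOD Ideal.span {(X : R⟦X⟧) ^ (n + 1)}] :=
        SModEq.rfl.mul (prod_smodEq_one fun i hi ↦ by
          simpa using one_sub_mul_X_pow_smodEq_one (1 : R⟦X⟧) (by grind : n + 1 ≤ i + 1))
    _ = _ := mul_one _

/-- Indexed by `k : ℤ` and zero outside `[0, n]`, so that shifting `k` never needs a boundary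
case; the exponent `k.toNat` is only ever used where `k ≥ 0`. -/
noncomputable def qBinomial : ℕ → ℤ → R⟦X⟧
  | 0, k => if k = 0 then 1 else 0
  | n + 1, k => qBinomial n (k - 1) + X ^ k.toNat * qBinomial n k

theorem qBinomial_succ (n : ℕ) (k : ℤ) :
    qBinomial (n + 1) k = qBinomial n (k - 1) + X ^ k.toNat * (qBinomial n k : R⟦X⟧) := rfl

theorem qBinomial_of_lt_zero {k : ℤ} (hk : k < 0) (n : ℕ) : qBinomial n k = (0 : R⟦X⟧) := by
  induction n generalizing k with
  | zero => simp [qBinomial, hk.ne]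
  | succ n ih => simp [qBinomial_succ, ih hk, ih (show k - 1 < 0 by omega)]

theorem qBinomial_of_gt {n : ℕ} {k : ℤ} (hk : n < k) : qBinomial n k = (0 : R⟦X⟧) := by
  induction n generalizing k with
  | zero => simp [qBinomial, show k ≠ 0 by omega]
  | succ n ih =>
    simp [qBinomial_succ, ih (show (n : ℤ) < k - 1 by omega), ih (show (n : ℤ) < k by omega)]

theorem qBinomial_zero_right (n : ℕ) : qBinomial n 0 = (1 : R⟦X⟧) := by
  induction n with
  | zero => simp [qBinomial]
  | succ n ih => simp [qBinomial_succ, ih, qBinomial_of_lt_zero]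

theorem qBinomial_mul_qPochhammer_mul_qPochhammer {n k : ℕ} (hk : k ≤ n) :
    qBinomial n k * qPochhammer k * qPochhammer (n - k) = (qPochhammer n : R⟦X⟧) := by
  induction n generalizing k with
  | zero => simp [Nat.le_zero.mp hk, qBinomial_zero_right, qPochhammer_zero]
  | succ n ih =>
    rcases k with _ | k
    · simp [qBinomial_zero_right, qPochhammer_zero]
    have hpascal : qBinomial (n + 1) (k + 1 : ℕ) =
        qBinomial n k + X ^ (k + 1) * (qBinomial n (k + 1 : ℕ) : R⟦X⟧) := by
      simp [qBinomial_succ]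
    rw [hpascal, qPochhammer_succ k, qPochhammer_succ n]
    rcases (Nat.le_of_lt_succ hk).eq_or_lt with rfl | hlt
    · have hk₁ : qBinomial k (k + 1 : ℕ) = (0 : R⟦X⟧) := qBinomial_of_gt (by push_cast; omega)
      have h := ih le_rfl
      rw [Nat.sub_self, qPochhammer_zero, mul_one] at h
      rw [hk₁, Nat.sub_self, qPochhammer_zero]
      linear_combination (1 - X ^ (k + 1)) * h
    · have h₁ := ih hlt.le
      have h₂ := ih hlt
      rw [show n - k = n - (k + 1) + 1 by omega, qPochhammer_succ] at h₁
      rw [qPochhammer_succ] at h₂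
      rw [show n + 1 - (k + 1) = n - (k + 1) + 1 by omega, qPochhammer_succ]
      have hX : (X : R⟦X⟧) ^ (k + 1) * X ^ (n - (k + 1) + 1) = X ^ (n + 1) := by
        rw [← pow_add]; congr 1; omega
      linear_combination (1 - X ^ (k + 1)) * h₁ +
        X ^ (k + 1) * (1 - X ^ (n - (k + 1) + 1)) * h₂ - qPochhammer n * hX

theorem qBinomial_symm (n : ℕ) (k : ℤ) : qBinomial n (n - k) = (qBinomial n k : R⟦X⟧) := by
  rcases lt_or_ge k 0 with hk | hk₀
  · rw [qBinomial_of_lt_zero hk, qBinomial_of_gt (by omega)]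
  rcases lt_or_ge (n : ℤ) k with hk | hkn
  · rw [qBinomial_of_gt hk, qBinomial_of_lt_zero (by omega)]
  lift k to ℕ using hk₀
  have hkn : k ≤ n := by omega
  have h₁ := qBinomial_mul_qPochhammer_mul_qPochhammer (R := R) hkn
  have h₂ := qBinomial_mul_qPochhammer_mul_qPochhammer (R := R) (Nat.sub_le n k)
  rw [Nat.sub_sub_self hkn, Nat.cast_sub hkn] at h₂
  refine ((isUnit_qPochhammer k).mul (isUnit_qPochhammer (n - k))).mul_right_cancel ?_
  linear_combination h₂ - h₁

theorem qBinomial_succ' (n : ℕ) (k : ℤ) :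
    qBinomial (n + 1) k =
      qBinomial n k + X ^ (n + 1 - k).toNat * (qBinomial n (k - 1) : R⟦X⟧) := by
  rw [← qBinomial_symm, qBinomial_succ, ← qBinomial_symm n k, ← qBinomial_symm n (k - 1)]
  push_cast
  ring_nf

theorem X_pow_mul_qBinomial_congr {n : ℕ} {k : ℤ} {a b : ℕ} (h : 0 ≤ k → k ≤ n → a = b) :
    X ^ a * qBinomial n k = X ^ b * (qBinomial n k : R⟦X⟧) := by
  rcases lt_or_ge k 0 with hk | hk₀
  · simp [qBinomial_of_lt_zero hk]
  rcases lt_or_ge (n : ℤ) k with hk | hkn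
  · simp [qBinomial_of_gt hk]
  rw [h hk₀ hkn]

theorem qBinomial_mul_qPochhammer_smodEq_one {n a b c : ℕ} (ha : n ≤ a) (hb : n ≤ b)
    (hc : n ≤ c) :
    qBinomial (a + b) a * qPochhammer c ≡ 1 [SMOD Ideal.span {(X : R⟦X⟧) ^ (n + 1)}] := by
  obtain ⟨u, hu⟩ := isUnit_qPochhammer (R := R) n
  have h := qBinomial_mul_qPochhammer_mul_qPochhammer (R := R) (Nat.le_add_right a b)
  rw [Nat.add_sub_cancel_left] at h
  have key : (qBinomial (a + b) a : R⟦X⟧) * u * u ≡ u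
      [SMOD Ideal.span {(X : R⟦X⟧) ^ (n + 1)}] := by
    rw [hu]
    calc _ ≡ qBinomial (a + b) a * qPochhammer a * qPochhammer b
            [SMOD Ideal.span {(X : R⟦X⟧) ^ (n + 1)}] :=
          ((SModEq.refl _).mul (qPochhammer_smodEq (R := R) ha).symm).mul
            (qPochhammer_smodEq (R := R) hb).symm
      _ = qPochhammer (a + b) := h
      _ ≡ qPochhammer n [SMOD Ideal.span {(X : R⟦X⟧) ^ (n + 1)}] := qPochhammer_smodEq (by omega)
  calc qBinomial (a + b) a * qPochhammer c
      ≡ (qBinomial (a + b) a : R⟦X⟧) * u * u * ↑u⁻¹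
        [SMOD Ideal.span {(X : R⟦X⟧) ^ (n + 1)}] := by
        rw [Units.mul_inv_cancel_right, hu]
        exact (SModEq.refl _).mul (qPochhammer_smodEq (R := R) hc)
    _ ≡ (u : R⟦X⟧) * ↑u⁻¹ [SMOD Ideal.span {(X : R⟦X⟧) ^ (n + 1)}] := key.mul (SModEq.refl _)
    _ = 1 := u.mul_inv

noncomputable def jacobiCoeff (m : ℕ) (j : ℤ) : R⟦X⟧ :=
  qBinomial (2 * m) (m + j) * X ^ j.triangular

theorem support_jacobiCoeff_subset (m : ℕ) :
    support (jacobiCoeff m : ℤ → R⟦X⟧) ⊆ Icc (-(m : ℤ)) m := by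
  intro j hj
  by_contra hj'
  rw [coe_Icc, Set.mem_Icc] at hj'
  rcases not_and_or.mp hj' with h | h
  · exact hj (by rw [jacobiCoeff, qBinomial_of_lt_zero (by omega), zero_mul])
  · exact hj (by rw [jacobiCoeff, qBinomial_of_gt (by push_cast; omega), zero_mul])

theorem jacobiCoeff_succ (m : ℕ) (j : ℤ) :
    jacobiCoeff (m + 1) j = (1 + X ^ (2 * m + 1)) * jacobiCoeff m j +
      X ^ (m + 1) * jacobiCoeff m (j - 1) + X ^ m * (jacobiCoeff m (j + 1) : R⟦X⟧) := by
  have hT := Int.triangular_add_one j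
  have hT' := Int.triangular_add_one (j - 1)
  rw [sub_add_cancel] at hT'
  have ha : X ^ (m + 1 - j).toNat * X ^ (m + j).toNat * qBinomial (2 * m) (m + j) =
      X ^ (2 * m + 1) * (qBinomial (2 * m) (m + j) : R⟦X⟧) := by
    rw [← pow_add]; exact X_pow_mul_qBinomial_congr (by omega)
  have hb : X ^ (m + 1 + j).toNat * X ^ j.triangular * qBinomial (2 * m) (m + 1 + j) =
      X ^ m * X ^ (j + 1).triangular * (qBinomial (2 * m) (m + 1 + j) : R⟦X⟧) := by
    rw [← pow_add, ← pow_add]; exact X_pow_mul_qBinomial_congr (by omega)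
  have hc : X ^ (m + 1 - j).toNat * X ^ j.triangular * qBinomial (2 * m) (m + j - 1) =
      X ^ (m + 1) * X ^ (j - 1).triangular * (qBinomial (2 * m) (m + j - 1) : R⟦X⟧) := by
    rw [← pow_add, ← pow_add]; exact X_pow_mul_qBinomial_congr (by omega)
  simp only [jacobiCoeff]
  rw [show 2 * (m + 1) = 2 * m + 1 + 1 by ring, qBinomial_succ', qBinomial_succ, qBinomial_succ]
  push_cast
  rw [show (m : ℤ) + 1 + j - 1 = m + j by ring,
    show 2 * (m : ℤ) + 1 + 1 - (m + 1 + j) = m + 1 - j by ring,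
    show (m : ℤ) + (j - 1) = m + j - 1 by ring, show (m : ℤ) + (j + 1) = m + 1 + j by ring]
  linear_combination X ^ j.triangular * ha + hb + hc

theorem prod_jacobi_eq_finsum (x : R⟦X⟧ˣ) (m : ℕ) :
    ∏ k ∈ range m, (1 + (x : R⟦X⟧) * X ^ (k + 1)) * (1 + (↑x⁻¹ : R⟦X⟧) * X ^ k) =
      ∑ᶠ j : ℤ, jacobiCoeff m j * (↑(x ^ j) : R⟦X⟧) := by
  induction m with
  | zero =>
    rw [finsum_eq_single _ 0 fun j hj ↦ by simp [jacobiCoeff, qBinomial, hj]]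
    simp [jacobiCoeff, qBinomial]
  | succ m ih =>
    have hfactor : (1 + (x : R⟦X⟧) * X ^ (m + 1)) * (1 + (↑x⁻¹ : R⟦X⟧) * X ^ m) =
        (1 + X ^ (2 * m + 1)) + X ^ (m + 1) * (x : R⟦X⟧) + X ^ m * (↑x⁻¹ : R⟦X⟧) := by
      linear_combination (X : R⟦X⟧) ^ (2 * m + 1) * x.mul_inv
    rw [prod_range_succ, ih, hfactor, finsum_mul_laurent_trinomial x
      ((Icc _ _).finite_toSet.subset (support_jacobiCoeff_subset m))]
    exact finsum_congr fun j ↦ by rw [jacobiCoeff_succ]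

theorem qPochhammer_mul_prod_jacobi_smodEq (x : R⟦X⟧ˣ) {d m : ℕ} (hm : 2 * d + 1 ≤ m) :
    qPochhammer m * ∏ k ∈ range m, (1 + (x : R⟦X⟧) * X ^ (k + 1)) * (1 + (↑x⁻¹ : R⟦X⟧) * X ^ k) ≡
      ∑ j ∈ Icc (-(m : ℤ)) m, (↑(x ^ j) : R⟦X⟧) * X ^ j.triangular
      [SMOD Ideal.span {(X : R⟦X⟧) ^ (d + 1)}] := by
  rw [prod_jacobi_eq_finsum, finsum_eq_sum_of_support_subset _
    ((support_mul_subset_left _ _).trans (support_jacobiCoeff_subset m)), mul_sum]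
  refine SModEq.sum fun j _ ↦ ?_
  -- If `triangular j ≤ d` then `|j| ≤ d + 1`, so `m ± j ≥ d` and `[2m, m + j] (X;X)_m ≡ 1`;
  -- otherwise both sides vanish modulo `X ^ (d + 1)`.
  by_cases h : j.triangular ≤ d
  · have := Int.le_triangular j
    have := Int.neg_le_triangular j
    obtain ⟨a, ha⟩ : ∃ a : ℕ, (a : ℤ) = m + j := ⟨(m + j).toNat, by omega⟩
    have hq := qBinomial_mul_qPochhammer_smodEq_one (R := R) (n := d) (a := a) (b := 2 * m - a)
      (c := m) (by omega) (by omega) (by omega)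
    rw [show a + (2 * m - a) = 2 * m by omega, ha] at hq
    calc qPochhammer m * (jacobiCoeff m j * (↑(x ^ j) : R⟦X⟧))
        = qBinomial (2 * m) (m + j) * qPochhammer m * ((↑(x ^ j) : R⟦X⟧) * X ^ j.triangular) := by
          rw [jacobiCoeff]; ring
      _ ≡ 1 * ((↑(x ^ j) : R⟦X⟧) * X ^ j.triangular) [SMOD Ideal.span {(X : R⟦X⟧) ^ (d + 1)}] :=
          hq.mul (SModEq.refl ((↑(x ^ j) : R⟦X⟧) * X ^ j.triangular))
      _ = _ := one_mul _
  · have h' : d + 1 ≤ j.triangular := by omega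
    calc qPochhammer m * (jacobiCoeff m j * (↑(x ^ j) : R⟦X⟧))
        = X ^ j.triangular * (qPochhammer m * qBinomial (2 * m) (m + j) * ↑(x ^ j)) := by
          rw [jacobiCoeff]; ring
      _ ≡ 0 [SMOD Ideal.span {(X : R⟦X⟧) ^ (d + 1)}] := X_pow_mul_smodEq_zero _ h'
      _ ≡ X ^ j.triangular * ↑(x ^ j) [SMOD Ideal.span {(X : R⟦X⟧) ^ (d + 1)}] :=
          (X_pow_mul_smodEq_zero _ h').symm
      _ = _ := mul_comm _ _

section Topology

open WithPiTopology

variable [TopologicalSpace R]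

theorem multipliable_of_smodEq_one {f : ℕ → R⟦X⟧}
    (hf : ∀ k, f k ≡ 1 [SMOD Ideal.span {(X : R⟦X⟧) ^ k}]) : Multipliable f := by
  have hord : Tendsto (fun k ↦ (f k - 1).order) atTop (𝓝 ⊤) := by
    refine ENat.tendsto_nhds_top_iff_natCast_lt.mpr fun n ↦
      eventually_atTop.mpr ⟨n + 1, fun k hk ↦ ?_⟩
    have hcoeff := smodEq_X_pow_iff.mp (hf k)
    exact (by exact_mod_cast hk : (n : ℕ∞) < k).trans_le
      (nat_le_order _ k fun i hi ↦ by simp [hcoeff i hi])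
  simpa using multipliable_one_add_of_tendsto_order_atTop_nhds_top R hord

theorem HasProd.smodEq_prod_range [T2Space R] {f : ℕ → R⟦X⟧} {a : R⟦X⟧} (ha : HasProd f a)
    (hf : ∀ k, f k ≡ 1 [SMOD Ideal.span {(X : R⟦X⟧) ^ k}]) (N : ℕ) :
    a ≡ ∏ k ∈ range N, f k [SMOD Ideal.span {(X : R⟦X⟧) ^ N}] := by
  have hpartial : ∀ s ⊇ range N,
      ∏ k ∈ s, f k ≡ ∏ k ∈ range N, f k [SMOD Ideal.span {(X : R⟦X⟧) ^ N}] := by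
    intro s hs
    rw [← prod_sdiff hs]
    calc _ ≡ (1 : R⟦X⟧) * ∏ k ∈ range N, f k [SMOD Ideal.span {(X : R⟦X⟧) ^ N}] :=
          (prod_smodEq_one fun k hk ↦ (hf k).X_pow_mono (by simp at hk; omega)).mul
            (SModEq.refl _)
      _ = _ := one_mul _
  refine smodEq_X_pow_iff.mpr fun d hd ↦ tendsto_nhds_unique
    ((tendsto_iff_coeff_tendsto R _ _ _).mp ha d) (tendsto_const_nhds.congr' ?_)
  filter_upwards [eventually_ge_atTop (range N)] with s hs
  exact (smodEq_X_pow_iff.mp (hpartial s hs) d hd).symm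

theorem hasSum_jacobi_triple_product [T2Space R] (x : R⟦X⟧ˣ) :
    HasSum (fun j : ℤ ↦ (↑(x ^ j) : R⟦X⟧) * X ^ j.triangular)
      (∏' k, (1 - X ^ (k + 1)) *
        ((1 + (x : R⟦X⟧) * X ^ (k + 1)) * (1 + (↑x⁻¹ : R⟦X⟧) * X ^ k))) := by
  set f : ℕ → R⟦X⟧ := fun k ↦
    (1 - X ^ (k + 1)) * ((1 + (x : R⟦X⟧) * X ^ (k + 1)) * (1 + (↑x⁻¹ : R⟦X⟧) * X ^ k))
  have hf : ∀ k, f k ≡ 1 [SMOD Ideal.span {(X : R⟦X⟧) ^ k}] := fun k ↦ by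
    simpa using (one_sub_mul_X_pow_smodEq_one (1 : R⟦X⟧) (Nat.le_succ k)).mul
      ((one_add_mul_X_pow_smodEq_one (x : R⟦X⟧) (Nat.le_succ k)).mul
        (one_add_mul_X_pow_smodEq_one (↑x⁻¹ : R⟦X⟧) le_rfl))
  rw [hasSum_iff_hasSum_coeff]
  intro d
  have hvanish : ∀ j ∉ Icc (-(2 * d + 1 : ℕ) : ℤ) (2 * d + 1 : ℕ),
      coeff d ((↑(x ^ j) : R⟦X⟧) * X ^ j.triangular) = 0 := by
    intro j hj
    have := Int.le_triangular j
    have := Int.neg_le_triangular j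
    rw [coeff_mul_X_pow', if_neg]
    simp only [mem_Icc, not_and_or, not_le] at hj
    omega
  convert hasSum_sum_of_ne_finset_zero (L := .unconditional ℤ) hvanish using 1
  rw [← map_sum]
  refine smodEq_X_pow_iff.mp ?_ d (lt_add_one d)
  calc ∏' k, f k ≡ ∏ k ∈ range (2 * d + 1), f k [SMOD Ideal.span {(X : R⟦X⟧) ^ (d + 1)}] :=
        ((multipliable_of_smodEq_one hf).hasProd.smodEq_prod_range hf _).X_pow_mono (by omega)
    _ = qPochhammer (2 * d + 1) * ∏ k ∈ range (2 * d + 1),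
          (1 + (x : R⟦X⟧) * X ^ (k + 1)) * (1 + (↑x⁻¹ : R⟦X⟧) * X ^ k) := prod_mul_distrib
    _ ≡ _ [SMOD Ideal.span {(X : R⟦X⟧) ^ (d + 1)}] := qPochhammer_mul_prod_jacobi_smodEq x le_rfl

theorem hasSum_jacobi_triple_product_nat [IsTopologicalRing R] [T2Space R] (x : R⟦X⟧ˣ) :
    HasSum
      (fun n : ℕ ↦
        ((↑(x ^ (n : ℤ)) : R⟦X⟧) + (↑(x ^ (-(n + 1 : ℤ))) : R⟦X⟧)) * X ^ (n + 1).choose 2)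
      ((1 + (↑x⁻¹ : R⟦X⟧)) * ((∏' k, (1 - X ^ (k + 1))) *
        (∏' k, (1 + (x : R⟦X⟧) * X ^ (k + 1))) * ∏' k, (1 + (↑x⁻¹ : R⟦X⟧) * X ^ (k + 1)))) := by
  have hA : Multipliable fun k : ℕ ↦ (1 - X ^ (k + 1) : R⟦X⟧) := multipliable_of_smodEq_one
    fun k ↦ by simpa using one_sub_mul_X_pow_smodEq_one (1 : R⟦X⟧) (Nat.le_succ k)
  have hB : Multipliable fun k : ℕ ↦ 1 + (x : R⟦X⟧) * X ^ (k + 1) :=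
    multipliable_of_smodEq_one fun k ↦ one_add_mul_X_pow_smodEq_one _ (Nat.le_succ k)
  have hC : Multipliable fun k : ℕ ↦ 1 + (↑x⁻¹ : R⟦X⟧) * X ^ k :=
    multipliable_of_smodEq_one fun k ↦ one_add_mul_X_pow_smodEq_one _ le_rfl
  have hC' : Multipliable fun k : ℕ ↦ 1 + (↑x⁻¹ : R⟦X⟧) * X ^ (k + 1) :=
    multipliable_of_smodEq_one fun k ↦ one_add_mul_X_pow_smodEq_one _ (Nat.le_succ k)
  have h := (hasSum_jacobi_triple_product x).nat_add_neg_add_one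
  rw [hA.tprod_mul (hB.mul hC), hB.tprod_mul hC,
    tprod_eq_zero_mul' (f := fun k ↦ 1 + (↑x⁻¹ : R⟦X⟧) * X ^ k) hC'] at h
  convert h using 1
  · ext n
    rw [Int.triangular_neg_add_one, Int.triangular_natCast, add_mul]
  · simp only [pow_zero, mul_one]
    ring

end Topology

end PowerSeries

namespace JTP

instance : DiscreteTopology K := ⟨rfl⟩

theorem t_ne_zero : t ≠ 0 := RatFunc.X_ne_zero

theorem one_sub_t_ne_zero : 1 - t ≠ 0 := by
  intro h
  have := RatFunc.intDegree_X (K := ℚ)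
  rw [← t, ← sub_eq_zero.mp h, RatFunc.intDegree_one] at this
  exact zero_ne_one this

theorem neg_t_zpow_add_neg_t_zpow_neg_add_one (n : ℕ) :
    (-t) ^ (n : ℤ) + (-t) ^ (-(n + 1 : ℤ)) =
      (1 - t⁻¹) * ((-1) ^ (n + 1) * ((t ^ (n + 1) - (t ^ n)⁻¹) / (1 - t))) := by
  have := t_ne_zero
  have := one_sub_t_ne_zero
  rw [zpow_neg, zpow_natCast, show (n + 1 : ℤ) = (n + 1 : ℕ) by push_cast; rfl, zpow_natCast,
    neg_pow t, neg_pow t, mul_inv, ← inv_pow, inv_neg_one]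
  field_simp
  ring

/-- The specialized Macdonald identity from 2-cores (Jacobi triple product form):
`Σ_{n≥1} (−1)^n T^{C(n,2)} (t^n − t^{1−n})/(1 − t) = (T;T)_∞ (tT;T)_∞ (T/t;T)_∞`,
as formal power series in `T` over `ℚ(t)`, with `(a;T)_∞ = Π_{k≥0}(1 − a T^k)`. -/
theorem jacobi_triple_product_twoCores :
    ∑' n : ℕ,
        ((-1 : PowerSeries K) ^ (n + 1) * (PowerSeries.X : PowerSeries K) ^ ((n + 1).choose 2) *
          PowerSeries.C (R := K) ((t ^ (n + 1) - (t ^ n)⁻¹) / (1 - t)))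
      = (∏' k : ℕ, (1 - (PowerSeries.X : PowerSeries K) ^ (k + 1))) *
        (∏' k : ℕ, (1 - PowerSeries.C (R := K) t * (PowerSeries.X : PowerSeries K) ^ (k + 1))) *
        (∏' k : ℕ, (1 - PowerSeries.C (R := K) t⁻¹ * (PowerSeries.X : PowerSeries K) ^ (k + 1))) := by
  set x : K⟦X⟧ˣ := Units.map (C (R := K)).toMonoidHom (Units.mk0 (-t) (neg_ne_zero.mpr t_ne_zero))
  have hx (j : ℤ) : (↑(x ^ j) : K⟦X⟧) = C ((-t) ^ j) := by
    simp [x, ← map_zpow, Units.val_zpow_eq_zpow_val]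
  have hx₁ : (x : K⟦X⟧) = -C t := by simp [x]
  have hx₂ : (↑x⁻¹ : K⟦X⟧) = -C t⁻¹ := by simp [x]
  have hc : (1 : K) - t⁻¹ ≠ 0 := by
    rw [sub_ne_zero, ne_comm, inv_ne_one]
    exact fun h ↦ one_sub_t_ne_zero (by rw [h, sub_self])
  have hcancel : C (1 - t⁻¹)⁻¹ * C (1 - t⁻¹) = (1 : K⟦X⟧) := by
    rw [← map_mul, inv_mul_cancel₀ hc, map_one]
  -- The general lemmas use Mathlib's scoped topology on `K⟦X⟧`, definitionally the one fixed above.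
  have h := open WithPiTopology in (hasSum_jacobi_triple_product_nat x).mul_left (C (1 - t⁻¹)⁻¹)
  rw [hx₂, ← mul_assoc, ← sub_eq_add_neg, ← map_one C, ← map_sub, hcancel, one_mul] at h
  simp only [hx₁, neg_mul, ← sub_eq_add_neg] at h
  refine (tsum_congr fun n ↦ ?_).trans (open WithPiTopology in h.tsum_eq)
  rw [hx, hx, ← map_add, neg_t_zpow_add_neg_t_zpow_neg_add_one]
  simp only [map_mul, map_pow, map_neg, map_one]
  linear_combination (-((-1 : K⟦X⟧) ^ (n + 1) * X ^ (n + 1).choose 2 *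
    C ((t ^ (n + 1) - (t ^ n)⁻¹) / (1 - t)))) * hcancel

end JTP
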